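/- Let $a_1 \leq \cdots \leq a_m$ be non-negative real numbers, and let $t$ be the smallest integer such that $\sum_{i=1}^{t}(a_t - a_i) \geq 4$ (set $t = m+1$ if no such integer exists). Let $\underline{r} = (r_1, \dots, r_m)$ with $r_1 \geq \cdots \geq r_m \geq 0$ and $\sum_i r_i = 1$ be a minimizer of $Q(r_1, \dots, r_m) = 2\sum_{i=1}^m r_i^2 + \sum_{i=1}^m a_i r_i$ over this simplex. Then $r_t = r_{t+1} = \cdots = r_m = 0$. -/

import Mathlib

open Finset

/-!
If the minimizer `r` puts positive mass `T` on the indices `i ≥ t`, spread that mass evenly,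
`δ = T / k` each, over the `k` indices `i < t`. The result stays in the ordered simplex, and the
quadratic part of `Q` grows by at most `4δ(1 - T) + 2δT = 4δ - 2δT`, while the linear part drops by at
least `a_t T - δ ∑_{i<t} a_i = δ (k a_t - ∑_{i<t} a_i) ≥ 4δ`, the defining property of `t`.
So `Q` strictly decreases, a contradiction.
-/

namespace OrderedSimplex

variable {ι : Type*} [LinearOrder ι]

def liftHead (r : ι → ℝ) (t : ι) (δ : ℝ) (i : ι) : ℝ := if i < t then r i + δ else 0

variable {r : ι → ℝ} {t : ι} {δ : ℝ}

lemma liftHead_nonneg (hr : ∀ i, 0 ≤ r i) (hδ : 0 ≤ δ) (i : ι) : 0 ≤ liftHead r t δ i := by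
  unfold liftHead
  split_ifs
  · linarith [hr i]
  · rfl

lemma liftHead_antitone (hr0 : ∀ i, 0 ≤ r i) (hr : Antitone r) (hδ : 0 ≤ δ) :
    Antitone (liftHead r t δ) := by
  intro i j hij
  unfold liftHead
  by_cases hj : j < t
  · rw [if_pos (hij.trans_lt hj), if_pos hj]
    linarith [hr hij]
  · rw [if_neg hj]
    exact liftHead_nonneg hr0 hδ i

variable [Fintype ι]

def quadCost (a : ι → ℝ) (r : ι → ℝ) : ℝ := 2 * ∑ i, r i ^ 2 + ∑ i, a i * r i

lemma sum_apply_liftHead (f : ι → ℝ → ℝ) (hf : ∀ i, f i 0 = 0) :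
    ∑ i, f i (liftHead r t δ i) = ∑ i ∈ univ.filter (· < t), f i (r i + δ) := by
  simp only [liftHead, apply_ite (f _), hf, sum_ite, sum_const_zero, add_zero]

lemma sum_liftHead :
    ∑ i, liftHead r t δ i = ∑ i ∈ univ.filter (· < t), r i + #(univ.filter (· < t)) * δ := by
  rw [sum_apply_liftHead (fun _ x => x) fun _ => rfl, sum_add_distrib, sum_const, nsmul_eq_mul]

lemma sum_sq_liftHead :
    ∑ i, liftHead r t δ i ^ 2 = ∑ i ∈ univ.filter (· < t), r i ^ 2
      + 2 * δ * ∑ i ∈ univ.filter (· < t), r i + #(univ.filter (· < t)) * δ ^ 2 := by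
  rw [sum_apply_liftHead (fun _ x => x ^ 2) fun _ => zero_pow two_ne_zero]
  simp only [add_sq, sum_add_distrib, sum_const, nsmul_eq_mul, ← sum_mul, ← mul_sum]
  ring

lemma sum_mul_liftHead (a : ι → ℝ) :
    ∑ i, a i * liftHead r t δ i = ∑ i ∈ univ.filter (· < t), a i * r i
      + δ * ∑ i ∈ univ.filter (· < t), a i := by
  rw [sum_apply_liftHead (fun i x => a i * x) fun _ => mul_zero _]
  simp only [mul_add, sum_add_distrib, ← sum_mul]
  ring

lemma four_add_sum_le_card_mul {a : ι → ℝ}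
    (ht : 4 ≤ ∑ i ∈ univ.filter (· ≤ t), (a t - a i)) :
    4 + ∑ i ∈ univ.filter (· < t), a i ≤ #(univ.filter (· < t)) * a t := by
  have hsplit : univ.filter (· ≤ t) = insert t (univ.filter (· < t)) := by
    ext i
    simp [le_iff_eq_or_lt]
  rw [hsplit, sum_insert (by simp), sub_self, zero_add, sum_sub_distrib, sum_const,
    nsmul_eq_mul] at ht
  linarith

lemma quadCost_liftHead_lt {a : ι → ℝ} (ha : Monotone a) (hr0 : ∀ i, 0 ≤ r i)
    (hrsum : ∑ i, r i = 1) (hδ : 0 < δ) (hT : 0 < ∑ i ∈ univ.filter (fun i => ¬ i < t), r i)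
    (hkδ : #(univ.filter (· < t)) * δ = ∑ i ∈ univ.filter (fun i => ¬ i < t), r i)
    (hka : 4 + ∑ i ∈ univ.filter (· < t), a i ≤ #(univ.filter (· < t)) * a t) :
    quadCost a (liftHead r t δ) < quadCost a r := by
  set k : ℝ := ((#(univ.filter (· < t)) : ℕ) : ℝ)
  set T := ∑ i ∈ univ.filter (fun i => ¬ i < t), r i
  set H := ∑ i ∈ univ.filter (· < t), r i
  have hsplit (f : ι → ℝ) :
      ∑ i, f i = ∑ i ∈ univ.filter (· < t), f i + ∑ i ∈ univ.filter (fun i => ¬ i < t), f i :=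
    (sum_filter_add_sum_filter_not _ _ _).symm
  have hHT : H + T = 1 := hrsum ▸ (hsplit r).symm
  have htail : a t * T ≤ ∑ i ∈ univ.filter (fun i => ¬ i < t), a i * r i := by
    rw [mul_sum]
    refine sum_le_sum fun i hi => mul_le_mul_of_nonneg_right (ha ?_) (hr0 i)
    simpa using hi
  have hgain : δ * (4 + ∑ i ∈ univ.filter (· < t), a i) ≤ a t * T := by
    calc δ * (4 + ∑ i ∈ univ.filter (· < t), a i) ≤ δ * (k * a t) :=
          mul_le_mul_of_nonneg_left hka hδ.le
      _ = a t * T := by rw [← hkδ]; ring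
  have hsq : 0 ≤ ∑ i ∈ univ.filter (fun i => ¬ i < t), r i ^ 2 :=
    sum_nonneg fun i _ => sq_nonneg (r i)
  have hkδ2 : k * δ ^ 2 = δ * T := by rw [← hkδ]; ring
  have hδH : δ * H = δ - δ * T := by rw [eq_sub_of_add_eq hHT]; ring
  have hδT : 0 < δ * T := mul_pos hδ hT
  unfold quadCost
  rw [sum_sq_liftHead, sum_mul_liftHead, hsplit (fun i => r i ^ 2), hsplit (fun i => a i * r i)]
  linarith

lemma exists_quadCost_lt_of_pos {a : ι → ℝ} (ha : Monotone a)
    (ht : 4 ≤ ∑ i ∈ univ.filter (· ≤ t), (a t - a i)) (hr0 : ∀ i, 0 ≤ r i)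
    (hrsum : ∑ i, r i = 1) (hr : Antitone r) (hrt : 0 < r t) :
    ∃ r' : ι → ℝ, (∀ i, 0 ≤ r' i) ∧ ∑ i, r' i = 1 ∧ Antitone r' ∧
      quadCost a r' < quadCost a r := by
  have hka := four_add_sum_le_card_mul ht
  have hk : (0 : ℝ) < #(univ.filter (· < t)) := by
    rw [Nat.cast_pos, card_pos, nonempty_iff_ne_empty]
    intro h
    rw [h] at hka
    norm_num at hka
  set T := ∑ i ∈ univ.filter (fun i => ¬ i < t), r i
  have hT : 0 < T := hrt.trans_le <| single_le_sum (fun i _ => hr0 i) (by simp)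
  have hkδ : #(univ.filter (· < t)) * (T / #(univ.filter (· < t))) = T :=
    mul_div_cancel₀ T hk.ne'
  have hδ : 0 < T / #(univ.filter (· < t)) := div_pos hT hk
  refine ⟨liftHead r t (T / #(univ.filter (· < t))), liftHead_nonneg hr0 hδ.le, ?_,
    liftHead_antitone hr0 hr hδ.le, quadCost_liftHead_lt ha hr0 hrsum hδ hT hkδ hka⟩
  rw [sum_liftHead, hkδ, sum_filter_add_sum_filter_not, hrsum]

end OrderedSimplex

theorem stmt6_general (m : ℕ) (a : Fin m → ℝ) (hamono : Monotone a)
    (t : Fin m)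
    (ht : 4 ≤ ∑ i ∈ Finset.univ.filter (fun i => i ≤ t), (a t - a i))
    (r : Fin m → ℝ) (hr0 : ∀ i, 0 ≤ r i) (hrsum : ∑ i, r i = 1) (hrmono : Antitone r)
    (hrmin : ∀ r' : Fin m → ℝ, (∀ i, 0 ≤ r' i) → (∑ i, r' i = 1) → Antitone r' →
      2 * ∑ i, (r i) ^ 2 + ∑ i, a i * r i ≤ 2 * ∑ i, (r' i) ^ 2 + ∑ i, a i * r' i) :
    ∀ i, t ≤ i → r i = 0 := by
  have hrt : r t = 0 := by
    by_contra hne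
    obtain ⟨r', hr'0, hr'sum, hr'mono, hlt⟩ := OrderedSimplex.exists_quadCost_lt_of_pos
      hamono ht hr0 hrsum hrmono ((hr0 t).lt_of_ne' hne)
    exact (hrmin r' hr'0 hr'sum hr'mono).not_gt hlt
  exact fun i hti => le_antisymm (hrt ▸ hrmono hti) (hr0 i)

/-- Let `a_1 ≤ … ≤ a_m` be non-negative reals and let `t` be the smallest index
such that `∑_{i=1}^t (a_t - a_i) ≥ 4` (if no such index exists the statement is vacuous).  If
`r = (r_1, …, r_m)`, with `r_1 ≥ … ≥ r_m ≥ 0` and `∑ r_i = 1`, minimizes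
`Q(r) = 2 ∑ r_i² + ∑ a_i r_i` over the ordered simplex, then `r_t = r_{t+1} = … = r_m = 0`. -/
theorem stmt6 (m : ℕ) (a : Fin m → ℝ) (ha0 : ∀ i, 0 ≤ a i) (hamono : Monotone a)
    (t : Fin m)
    (ht : 4 ≤ ∑ i ∈ Finset.univ.filter (fun i => i ≤ t), (a t - a i))
    (htmin : ∀ t' : Fin m, t' < t →
      ∑ i ∈ Finset.univ.filter (fun i => i ≤ t'), (a t' - a i) < 4)
    (r : Fin m → ℝ) (hr0 : ∀ i, 0 ≤ r i) (hrsum : ∑ i, r i = 1) (hrmono : Antitone r)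
    (hrmin : ∀ r' : Fin m → ℝ, (∀ i, 0 ≤ r' i) → (∑ i, r' i = 1) → Antitone r' →
      2 * ∑ i, (r i) ^ 2 + ∑ i, a i * r i ≤ 2 * ∑ i, (r' i) ^ 2 + ∑ i, a i * r' i) :
    ∀ i, t ≤ i → r i = 0 :=
  stmt6_general m a hamono t ht r hr0 hrsum hrmono hrmin
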